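/- Let N be a von Neumann algebra and V a commutative von Neumann subalgebra. For any two projections P, Q ∈ N, δ(P ∨ Q)_V = δ(P)_V ∨ δ(Q)_V, where ∨ denotes the join in the respective projection lattices. -/

import Mathlib

/-! Outer daseinisation `δ(-)_V` is the lower adjoint of the inclusion `P(V) ⊆ P(N)`: for a projection
`S ∈ V` one has `δ(P)_V ≤ S ↔ P ≤ S`. Lower adjoints preserve joins, and the order `PQ = P` is
antisymmetric on self-adjoint operators, which pins down the join. -/

variable {H : Type*} [NormedAddCommGroup H] [InnerProductSpace ℂ H] [CompleteSpace H]

/-- A bounded operator is a projection if it is self-adjoint and idempotent. -/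
def IsProjection (p : H →L[ℂ] H) : Prop :=
  IsSelfAdjoint p ∧ IsIdempotentElem p

/-- The order on projections: `P ≤ Q` iff `PQ = P`. -/
def ProjLE (p q : H →L[ℂ] H) : Prop := p * q = p

/-- `d` is the outer daseinisation `δ(P)_V` of a projection `P` in the context `V`:
the smallest projection in `V` dominating `P` (equivalently, the infimum in the
projection lattice of `V` of `{Q ∈ P(V) : Q ≥ P}`). -/
def IsDaseinisation (V : VonNeumannAlgebra H) (P d : H →L[ℂ] H) : Prop :=
  (d ∈ V ∧ IsProjection d ∧ ProjLE P d) ∧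
    ∀ Q : H →L[ℂ] H, Q ∈ V → IsProjection Q → ProjLE P Q → ProjLE d Q

/-- `J` is the join `P ∨ Q` in the projection lattice of the von Neumann algebra `W`:
the least projection in `W` dominating both `P` and `Q`. -/
def IsProjJoin (W : VonNeumannAlgebra H) (P Q J : H →L[ℂ] H) : Prop :=
  (J ∈ W ∧ IsProjection J ∧ ProjLE P J ∧ ProjLE Q J) ∧
    ∀ S : H →L[ℂ] H, S ∈ W → IsProjection S → ProjLE P S → ProjLE Q S → ProjLE J S

/-- `M` is the meet `P ∧ Q` in the projection lattice of the von Neumann algebra `W`: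
the greatest projection in `W` dominated by both `P` and `Q`. -/
def IsProjMeet (W : VonNeumannAlgebra H) (P Q M : H →L[ℂ] H) : Prop :=
  (M ∈ W ∧ IsProjection M ∧ ProjLE M P ∧ ProjLE M Q) ∧
    ∀ S : H →L[ℂ] H, S ∈ W → IsProjection S → ProjLE S P → ProjLE S Q → ProjLE S M

omit [CompleteSpace H] in
theorem ProjLE.trans {p q r : H →L[ℂ] H} (hpq : ProjLE p q) (hqr : ProjLE q r) : ProjLE p r := by
  unfold ProjLE at *
  rw [← hpq, mul_assoc, hqr]

theorem ProjLE.antisymm {p q : H →L[ℂ] H} (hp : IsSelfAdjoint p) (hq : IsSelfAdjoint q)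
    (hpq : ProjLE p q) (hqp : ProjLE q p) : p = q :=
  calc p = star (p * q) := by rw [hpq, hp.star_eq]
    _ = q * p := by rw [star_mul, hp.star_eq, hq.star_eq]
    _ = q := hqp

theorem IsDaseinisation.projLE_iff {V : VonNeumannAlgebra H} {P d S : H →L[ℂ] H}
    (hd : IsDaseinisation V P d) (hSV : S ∈ V) (hS : IsProjection S) :
    ProjLE d S ↔ ProjLE P S :=
  ⟨hd.1.2.2.trans, hd.2 S hSV hS⟩

theorem IsProjJoin.projLE_iff {W : VonNeumannAlgebra H} {P Q J S : H →L[ℂ] H}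
    (hJ : IsProjJoin W P Q J) (hSW : S ∈ W) (hS : IsProjection S) :
    ProjLE J S ↔ ProjLE P S ∧ ProjLE Q S :=
  ⟨fun h => ⟨hJ.1.2.2.1.trans h, hJ.1.2.2.2.trans h⟩, fun h => hJ.2 S hSW hS h.1 h.2⟩

theorem daseinisation_join_general
    (N V : VonNeumannAlgebra H)
    (hVN : ∀ x : H →L[ℂ] H, x ∈ V → x ∈ N)
    (P Q : H →L[ℂ] H)
    (J dJ dP dQ JV : H →L[ℂ] H)
    (hJ : IsProjJoin N P Q J)
    (hdJ : IsDaseinisation V J dJ)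
    (hdP : IsDaseinisation V P dP)
    (hdQ : IsDaseinisation V Q dQ)
    (hJV : IsProjJoin V dP dQ JV) :
    dJ = JV := by
  obtain ⟨hdJV, hdJproj, hJdJ⟩ := hdJ.1
  obtain ⟨hJVV, hJVproj, hdPJV, hdQJV⟩ := hJV.1
  have hdJ_le : ProjLE dJ JV := by
    rw [hdJ.projLE_iff hJVV hJVproj, hJ.projLE_iff (hVN JV hJVV) hJVproj,
      ← hdP.projLE_iff hJVV hJVproj, ← hdQ.projLE_iff hJVV hJVproj]
    exact ⟨hdPJV, hdQJV⟩
  have hJV_le : ProjLE JV dJ := by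
    rw [hJV.projLE_iff hdJV hdJproj, hdP.projLE_iff hdJV hdJproj, hdQ.projLE_iff hdJV hdJproj,
      ← hJ.projLE_iff (hVN dJ hdJV) hdJproj]
    exact hJdJ
  exact ProjLE.antisymm hdJproj.1 hJVproj.1 hdJ_le hJV_le

/-- Let `N` be a von Neumann algebra and `V` a commutative von Neumann
subalgebra. For any two projections `P, Q ∈ N`,
`δ(P ∨ Q)_V = δ(P)_V ∨ δ(Q)_V`, where `∨` denotes the join in the respective
projection lattices. -/
theorem daseinisation_join
    (N V : VonNeumannAlgebra H)
    (hVN : ∀ x : H →L[ℂ] H, x ∈ V → x ∈ N)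
    (hcomm : ∀ a b : H →L[ℂ] H, a ∈ V → b ∈ V → a * b = b * a)
    (P Q : H →L[ℂ] H) (hPN : P ∈ N) (hQN : Q ∈ N)
    (hP : IsProjection P) (hQ : IsProjection Q)
    (J dJ dP dQ JV : H →L[ℂ] H)
    (hJ : IsProjJoin N P Q J)
    (hdJ : IsDaseinisation V J dJ)
    (hdP : IsDaseinisation V P dP)
    (hdQ : IsDaseinisation V Q dQ)
    (hJV : IsProjJoin V dP dQ JV) :
    dJ = JV :=
  daseinisation_join_general N V hVN P Q J dJ dP dQ JV hJ hdJ hdP hdQ hJV
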